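/- Let 0 ≤ α < 1 and let p be a function analytic on the open unit disk 𝔻 with p(0) = 1. If |z·p'(z) + ((1+α)/(1−α))·p(z) − (1/(1−α))·p(z)² − α/(1−α)| < (1−α)/2 for all z ∈ 𝔻, then Re p(z) > α for all z ∈ 𝔻. -/

import Mathlib

open Complex Metric Filter Topology

/-!
Put `q = (p - α) / (1 - α)`, so that `q 0 = 1` and the hypothesis reads `|z q' + q - q²| < 1/2`.
If `Re q` is not positive on the disk, let `z₀` be a point of least modulus where `Re q` vanishes,
so `q z₀ = iρ`. As `Re q ≥ 0` on the circle `|z| = |z₀|` with equality at `z₀`, the number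
`σ = z₀ q'(z₀)` is real; Schwarz's lemma for the Cayley transform `(1 - q) / (1 + q)` on
`|z| < |z₀|`, followed by the radial limit `z → z₀`, gives `σ ≤ -(1 + ρ²) / 2` (the
Miller–Mocanu lemma). Then `|z₀ q'(z₀) + q z₀ - (q z₀)²|² = (σ + ρ²)² + ρ² ≥ 1/4`, a contradiction.
-/

namespace Complex

lemma sq_norm_one_add (w : ℂ) : ‖1 + w‖ ^ 2 = 1 + 2 * w.re + ‖w‖ ^ 2 := by
  simp only [Complex.sq_norm, normSq_apply, add_re, add_im, one_re, one_im]
  ring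

lemma sq_norm_one_sub (w : ℂ) : ‖1 - w‖ ^ 2 = 1 - 2 * w.re + ‖w‖ ^ 2 := by
  simp only [Complex.sq_norm, normSq_apply, sub_re, sub_im, one_re, one_im]
  ring

lemma norm_one_sub_lt_norm_one_add {w : ℂ} (hw : 0 < w.re) : ‖1 - w‖ < ‖1 + w‖ := by
  refine lt_of_pow_lt_pow_left₀ 2 (norm_nonneg _) ?_
  rw [sq_norm_one_sub, sq_norm_one_add]
  linarith

lemma one_add_ne_zero_of_re_pos {w : ℂ} (hw : 0 < w.re) : 1 + w ≠ 0 := fun h => by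
  simpa [h] using (norm_nonneg (1 - w)).trans_lt (norm_one_sub_lt_norm_one_add hw)

/-- Schwarz's lemma applied to the Cayley transform `(1 - f) / (1 + f)`, which maps the disk
to itself and fixes `0`. -/
lemma sub_sq_mul_one_add_sq_norm_le_re_of_re_pos {f : ℂ → ℂ} {R : ℝ}
    (hf : DifferentiableOn ℂ f (ball 0 R)) (hre : ∀ z ∈ ball 0 R, 0 < (f z).re) (hf0 : f 0 = 1)
    {z : ℂ} (hz : z ∈ ball 0 R) :
    (R ^ 2 - ‖z‖ ^ 2) * (1 + ‖f z‖ ^ 2) ≤ 2 * (R ^ 2 + ‖z‖ ^ 2) * (f z).re := by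
  set B : ℂ → ℂ := fun ζ => (1 - f ζ) / (1 + f ζ)
  have hB : DifferentiableOn ℂ B (ball 0 R) :=
    ((differentiableOn_const 1).sub hf).div ((differentiableOn_const 1).add hf)
      fun ζ hζ => one_add_ne_zero_of_re_pos (hre ζ hζ)
  have hB0 : B 0 = 0 := by simp [B, hf0]
  have hmaps : Set.MapsTo B (ball 0 R) (closedBall (B 0) 1) := fun ζ hζ => by
    rw [hB0, mem_closedBall_zero_iff, norm_div,
      div_le_one (norm_pos_iff.2 (one_add_ne_zero_of_re_pos (hre ζ hζ)))]
    exact (norm_one_sub_lt_norm_one_add (hre ζ hζ)).le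
  have hR : 0 < R := (mem_ball_zero_iff.1 hz).trans_le' (norm_nonneg z)
  have hschwarz := dist_le_div_mul_dist_of_mapsTo_ball hB hmaps hz
  rw [hB0, dist_zero_right, dist_zero_right, norm_div,
    div_le_iff₀ (norm_pos_iff.2 (one_add_ne_zero_of_re_pos (hre z hz))),
    div_mul_eq_mul_div, one_mul, mul_comm, ← mul_div_assoc, le_div_iff₀ hR] at hschwarz
  have hsq := pow_le_pow_left₀ (by positivity) hschwarz 2
  rw [mul_pow, mul_pow, sq_norm_one_sub, sq_norm_one_add] at hsq
  nlinarith

lemma im_mul_deriv_eq_zero_of_forall_re_le {f : ℂ → ℂ} {z d : ℂ} (hd : HasDerivAt f d z)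
    (hmin : ∀ w, ‖w‖ = ‖z‖ → (f z).re ≤ (f w).re) : (z * d).im = 0 := by
  have hrot : HasDerivAt (fun ζ : ℂ => z * exp (ζ * I)) (z * I) ((0 : ℝ) : ℂ) := by
    simpa using ((hasDerivAt_id ((0 : ℝ) : ℂ)).mul_const I).cexp.const_mul z
  have hcirc : HasDerivAt (fun θ : ℝ => (f (z * exp (θ * I))).re) (d * (z * I)).re 0 :=
    (hd.comp_of_eq _ hrot (by simp)).real_of_complex
  have hloc : IsLocalMin (fun θ : ℝ => (f (z * exp (θ * I))).re) 0 :=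
    Eventually.of_forall fun θ => by simpa using hmin _ (by simp [norm_exp])
  have := hloc.hasDerivAt_eq_zero hcirc
  simp only [mul_re, mul_im, I_re, I_im] at this ⊢
  linarith

lemma re_mul_deriv_le_of_re_pos {q : ℂ → ℂ} {z₀ d : ℂ}
    (hq : DifferentiableOn ℂ q (ball 0 ‖z₀‖)) (hre : ∀ z ∈ ball 0 ‖z₀‖, 0 < (q z).re)
    (hq0 : q 0 = 1) (hz₀ : (q z₀).re = 0) (hd : HasDerivAt q d z₀) :
    (z₀ * d).re ≤ -(1 + ‖q z₀‖ ^ 2) / 2 := by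
  have hz₀0 : z₀ ≠ 0 := by rintro rfl; simp [hq0] at hz₀
  have hR : 0 < ‖z₀‖ := norm_pos_iff.2 hz₀0
  have hline : HasDerivAt (fun ζ : ℂ => q (z₀ * ζ)) (z₀ * d) ((1 : ℝ) : ℂ) := by
    have hmul : HasDerivAt (fun ζ : ℂ => z₀ * ζ) z₀ ((1 : ℝ) : ℂ) := by
      simpa using (hasDerivAt_id _).const_mul z₀
    simpa [mul_comm, Function.comp_def] using hd.comp_of_eq _ hmul (by simp)
  set g : ℝ → ℝ := fun t => (q (z₀ * t)).re
  have hg : HasDerivAt g (z₀ * d).re 1 := hline.real_of_complex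
  set F : ℝ → ℝ := fun t => -((1 + t) * (1 + ‖q (z₀ * t)‖ ^ 2)) / (2 * (1 + t ^ 2))
  have hF : Tendsto F (𝓝[<] 1) (𝓝 (-(1 + ‖q z₀‖ ^ 2) / 2)) := by
    have hcont : ContinuousAt F 1 := by
      have : ContinuousAt (fun t : ℝ => q (z₀ * t)) 1 :=
        hline.continuousAt.comp continuous_ofReal.continuousAt
      exact ((continuousAt_const.add continuousAt_id).mul
        (continuousAt_const.add (this.norm.pow 2))).neg.div (by fun_prop) (by positivity)
    convert hcont.tendsto.mono_left nhdsWithin_le_nhds using 2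
    simp [F]
    ring
  have hslope : Tendsto (slope g 1) (𝓝[<] 1) (𝓝 (z₀ * d).re) :=
    hasDerivWithinAt_iff_tendsto_slope' (by simp) |>.1 hg.hasDerivWithinAt
  -- The bound of the Cayley–Schwarz lemma at `t z₀`, divided by `1 - t`, bounds the slopes.
  refine le_of_tendsto_of_tendsto hslope hF ?_
  filter_upwards [Ioo_mem_nhdsLT (zero_lt_one' ℝ)] with t ⟨ht0, ht1⟩
  have hmem : z₀ * t ∈ ball 0 ‖z₀‖ := by
    rw [mem_ball_zero_iff, norm_mul, norm_real, Real.norm_of_nonneg ht0.le]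
    exact mul_lt_of_lt_one_right hR ht1
  have harnack := sub_sq_mul_one_add_sq_norm_le_re_of_re_pos hq hre hq0 hmem
  rw [norm_mul, norm_real, Real.norm_of_nonneg ht0.le, mul_pow] at harnack
  have hg1 : g 1 = 0 := by simpa [g] using hz₀
  have key : (1 - t ^ 2) * (1 + ‖q (z₀ * t)‖ ^ 2) ≤ 2 * (1 + t ^ 2) * g t := by
    refine le_of_mul_le_mul_left ?_ (pow_pos hR 2)
    linear_combination harnack
  rw [slope_def_field, hg1, sub_zero, div_le_iff_of_neg (by linarith), div_mul_eq_mul_div,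
    div_le_iff₀ (by positivity)]
  nlinarith

lemma half_le_norm_add_sub_sq {v w : ℂ} (hv : v.re = 0) (hw : w.im = 0)
    (hwv : w.re ≤ -(1 + ‖v‖ ^ 2) / 2) : 1 / 2 ≤ ‖w + v - v ^ 2‖ := by
  have hsq : ‖w + v - v ^ 2‖ ^ 2 = (w.re + v.im ^ 2) ^ 2 + v.im ^ 2 := by
    rw [Complex.sq_norm, normSq_apply]
    simp only [add_re, sub_re, add_im, sub_im, pow_two, mul_re, mul_im, hv, hw]
    ring
  have hv' : ‖v‖ ^ 2 = v.im ^ 2 := by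
    rw [← sq_norm_sub_sq_re, hv]
    ring
  rw [hv'] at hwv
  refine le_of_pow_le_pow_left₀ two_ne_zero (norm_nonneg _) ?_
  rw [hsq]
  nlinarith [sq_nonneg (v.im ^ 2 - 1), sq_nonneg v.im]

end Complex

lemma exists_first_zero_on_ball {E : Type*} [NormedAddCommGroup E] [NormedSpace ℝ E]
    [ProperSpace E] {u : E → ℝ} {R : ℝ} (hu : ContinuousOn u (ball 0 R)) (hu0 : 0 < u 0)
    {x : E} (hx : x ∈ ball 0 R) (hux : u x ≤ 0) :
    ∃ z ∈ ball 0 R, u z = 0 ∧ (∀ w ∈ ball 0 ‖z‖, 0 < u w) ∧ ∀ w ∈ closedBall 0 ‖z‖, 0 ≤ u w := by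
  have hxR : ‖x‖ < R := mem_ball_zero_iff.1 hx
  have hux' : ContinuousOn u (closedBall 0 ‖x‖) := hu.mono (closedBall_subset_ball hxR)
  set S := closedBall (0 : E) ‖x‖ ∩ u ⁻¹' Set.Iic 0
  have hS : IsCompact S := (isCompact_closedBall 0 _).of_isClosed_subset
    (hux'.preimage_isClosed_of_isClosed isClosed_closedBall isClosed_Iic) Set.inter_subset_left
  obtain ⟨z, ⟨hzx, huz⟩, hzmin⟩ :=
    hS.exists_isMinOn ⟨x, by simp [S, hux]⟩ continuous_norm.continuousOn
  have hzx : ‖z‖ ≤ ‖x‖ := mem_closedBall_zero_iff.1 hzx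
  have hpos : ∀ w ∈ ball 0 ‖z‖, 0 < u w := fun w hw => by
    rw [mem_ball_zero_iff] at hw
    by_contra! huw
    exact (hzmin ⟨mem_closedBall_zero_iff.2 (hw.le.trans hzx), huw⟩).not_gt hw
  have hz0 : z ≠ 0 := by rintro rfl; exact huz.not_gt hu0
  have hnonneg : ∀ w ∈ closedBall 0 ‖z‖, 0 ≤ u w := fun w hw => by
    have hT := (hux'.mono (closedBall_subset_closedBall hzx)).preimage_isClosed_of_isClosed
      isClosed_closedBall (isClosed_Ici (a := 0))
    rw [← closure_ball 0 (norm_ne_zero_iff.2 hz0)] at hw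
    exact (hT.closure_subset_iff.2 (fun v hv => ⟨ball_subset_closedBall hv, (hpos v hv).le⟩) hw).2
  exact ⟨z, mem_ball_zero_iff.2 (hzx.trans_lt hxR),
    le_antisymm huz (hnonneg z (mem_closedBall_zero_iff.2 le_rfl)), hpos, hnonneg⟩

theorem re_pos_of_norm_mul_deriv_add_sub_sq_lt {q : ℂ → ℂ}
    (hq : DifferentiableOn ℂ q (ball 0 1)) (hq0 : q 0 = 1)
    (h : ∀ z ∈ ball 0 1, ‖z * deriv q z + q z - q z ^ 2‖ < 1 / 2) :
    ∀ z ∈ ball 0 1, 0 < (q z).re := by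
  intro x hx
  by_contra! hx'
  obtain ⟨z₀, hz₀, hre0, hpos, hnonneg⟩ := exists_first_zero_on_ball
    (u := fun z => (q z).re) (continuous_re.comp_continuousOn hq.continuousOn) (by simp [hq0])
    hx hx'
  have hd : HasDerivAt q (deriv q z₀) z₀ :=
    (hq.differentiableAt (isOpen_ball.mem_nhds hz₀)).hasDerivAt
  have him : (z₀ * deriv q z₀).im = 0 := im_mul_deriv_eq_zero_of_forall_re_le hd
    fun w hw => hre0 ▸ hnonneg w (mem_closedBall_zero_iff.2 hw.le)
  have hre := re_mul_deriv_le_of_re_pos (hq.mono (ball_subset_ball (mem_ball_zero_iff.1 hz₀).le))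
    hpos hq0 hre0 hd
  exact (h z₀ hz₀).not_ge (half_le_norm_add_sub_sq hre0 him hre)

theorem stmt_13 (α : ℝ) (hα1 : α < 1)
    (p : ℂ → ℂ)
    (hp : AnalyticOnNhd ℂ p (ball (0 : ℂ) 1))
    (hp0 : p 0 = 1)
    (hineq : ∀ z ∈ ball (0 : ℂ) 1,
      ‖z * deriv p z + ((1 + (α : ℂ)) / (1 - (α : ℂ))) * p z
        - (1 / (1 - (α : ℂ))) * (p z) ^ 2 - (α : ℂ) / (1 - (α : ℂ))‖ < (1 - α) / 2) :
    ∀ z ∈ ball (0 : ℂ) 1, α < (p z).re := by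
  have hα : 0 < 1 - α := sub_pos.2 hα1
  have hc : (1 : ℂ) - α ≠ 0 := by exact_mod_cast hα.ne'
  set q : ℂ → ℂ := fun z => (p z - α) / (1 - α : ℝ)
  have hq : DifferentiableOn ℂ q (ball 0 1) := (hp.differentiableOn.sub_const _).div_const _
  have hq0 : q 0 = 1 := by simp [q, hp0, hc]
  have hqineq : ∀ z ∈ ball (0 : ℂ) 1, ‖z * deriv q z + q z - q z ^ 2‖ < 1 / 2 := by
    intro z hz
    have hderiv : deriv q z = deriv p z / (1 - α : ℝ) := by
      simp only [q, deriv_div_const, deriv_sub_const]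
    have hid : z * deriv q z + q z - q z ^ 2 =
        (z * deriv p z + ((1 + (α : ℂ)) / (1 - (α : ℂ))) * p z
          - (1 / (1 - (α : ℂ))) * (p z) ^ 2 - (α : ℂ) / (1 - (α : ℂ))) / (1 - α : ℝ) := by
      simp only [hderiv, q]
      push_cast
      field_simp
      ring
    rw [hid, norm_div, norm_real, Real.norm_of_nonneg hα.le, div_lt_iff₀ hα]
    linarith [hineq z hz]
  intro z hz
  have := re_pos_of_norm_mul_deriv_add_sub_sq_lt hq hq0 hqineq z hz
  rw [div_ofReal_re, sub_re, ofReal_re] at this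
  linarith [(div_pos_iff_of_pos_right hα).1 this]
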